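/- arXiv:0712.0910 — 3 statements merged into one kernel-verified Lean document; each statement's English description precedes it below -/
import Mathlib

section
/- Let J : [0,T] → ℝ^{n×n} be bounded measurable with J_{ij}(t) ≥ 0 for all i ≠ j and all t, and let C : [0,T] → ℝ^n be bounded measurable. Suppose x : [0,T] → ℝ^n is absolutely continuous with x'(t) ≤ J(t)x(t) + C(t) componentwise for a.e. t, and y : [0,T] → ℝ^n is a weak solution of y' = J(t)y + C(t) with y(0) ≥ x(0) componentwise. Then x(t) ≤ y(t) componentwise for all t ∈ [0,T]. -/
/-!
Put `z = x - y` and `p = ‖z⁺‖` (sup norm of the positive part), an absolutely continuous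
function with `p 0 = 0`. Where `p t > 0` the sup is attained at an index `i` with `zᵢ t = p t`;
since `zᵢ ≤ p` everywhere, `p' t = zᵢ' t ≤ (J z)ᵢ t`, and the nonnegative off-diagonal entries
give `(J z)ᵢ ≤ n M p` (where `|Jᵢⱼ| ≤ M`) because `zⱼ ≤ p`. So `p' ≤ n M p` a.e., and the
fundamental theorem of calculus for absolutely continuous functions, applied to
`exp (-n M t) * p t`, yields `p ≤ 0`.
-/

open Set MeasureTheory

/-- Absolute continuity on `[a,b]` via the ε-δ total-variation criterion. -/
def AbsolutelyContinuousOn {E : Type*} [NormedAddCommGroup E] (f : ℝ → E) (a b : ℝ) : Prop :=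
  ∀ ε > 0, ∃ δ > 0, ∀ (N : ℕ) (c d : Fin N → ℝ),
    (∀ i, a ≤ c i ∧ c i ≤ d i ∧ d i ≤ b) →
    (Pairwise fun i j => Disjoint (Set.Ioo (c i) (d i)) (Set.Ioo (c j) (d j))) →
    (∑ i, (d i - c i)) < δ → (∑ i, ‖f (d i) - f (c i)‖) < ε

open Filter Topology Matrix

theorem AbsolutelyContinuousOn.absolutelyContinuousOnInterval {E : Type*} [NormedAddCommGroup E]
    {f : ℝ → E} {a b : ℝ} (hf : AbsolutelyContinuousOn f a b) (hab : a ≤ b) :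
    AbsolutelyContinuousOnInterval f a b := by
  rw [absolutelyContinuousOnInterval_iff]
  intro ε hε
  obtain ⟨δ, hδ, hfδ⟩ := hf ε hε
  refine ⟨δ, hδ, fun ⟨N, I⟩ hI hsum => ?_⟩
  -- Mathlib's families may have `(I i).2 < (I i).1`; sort each pair with `min` / `max`.
  have hmem (i : Fin N) : (I i).1 ∈ Icc a b ∧ (I i).2 ∈ Icc a b := by
    simpa [uIcc_of_le hab] using hI.1 i (by simp)
  have hlen (i : Fin N) : max (I i).1 (I i).2 - min (I i).1 (I i).2 = dist (I i).1 (I i).2 := by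
    rw [max_sub_min_eq_abs', Real.dist_eq]
  have hvar (i : Fin N) :
      ‖f (max (I i).1 (I i).2) - f (min (I i).1 (I i).2)‖ = dist (f (I i).1) (f (I i).2) := by
    rcases le_total (I i).1 (I i).2 with h | h <;> simp [h, dist_eq_norm, norm_sub_rev]
  have hvar_lt := hfδ N (fun i => min (I i).1 (I i).2) (fun i => max (I i).1 (I i).2)
    (fun i => ⟨le_min (hmem i).1.1 (hmem i).2.1, min_le_max, max_le (hmem i).1.2 (hmem i).2.2⟩)
    (fun i j hij => (hI.2 (by simp) (by simp) (Fin.val_ne_of_ne hij)).mono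
      Ioo_subset_Ioc_self Ioo_subset_Ioc_self)
    (by simpa only [hlen, Fin.sum_univ_eq_sum_range (fun i => dist (I i).1 (I i).2)] using hsum)
  simpa only [hvar, Fin.sum_univ_eq_sum_range (fun i => dist (f (I i).1) (f (I i).2))] using hvar_lt

theorem LipschitzWith.comp_absolutelyContinuousOnInterval {X Y : Type*} [PseudoMetricSpace X]
    [PseudoMetricSpace Y] {g : X → Y} {K : NNReal} {f : ℝ → X} {a b : ℝ} (hg : LipschitzWith K g)
    (hf : AbsolutelyContinuousOnInterval f a b) : AbsolutelyContinuousOnInterval (g ∘ f) a b := by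
  unfold AbsolutelyContinuousOnInterval at hf ⊢
  refine squeeze_zero (fun _ => Finset.sum_nonneg fun _ _ => dist_nonneg) (fun E => ?_)
    (by simpa using hf.const_mul (K : ℝ))
  rw [Finset.mul_sum]
  exact Finset.sum_le_sum fun i _ => hg.dist_le_mul _ _

theorem AbsolutelyContinuousOnInterval.ae_differentiableAt_pi {ι : Type*} [Fintype ι]
    {f : ℝ → ι → ℝ} {a b : ℝ} (hf : AbsolutelyContinuousOnInterval f a b) :
    ∀ᵐ t, t ∈ uIcc a b → DifferentiableAt ℝ f t := by
  have h (i : ι) :=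
    ((LipschitzWith.eval i).comp_absolutelyContinuousOnInterval hf).ae_differentiableAt
  filter_upwards [ae_all_iff.mpr h] with t ht hmem
  exact differentiableAt_pi.mpr fun i => ht i hmem

theorem AbsolutelyContinuousOnInterval.le_of_ae_deriv_nonpos {f : ℝ → ℝ} {a b : ℝ}
    (hf : AbsolutelyContinuousOnInterval f a b) (hab : a ≤ b)
    (hd : ∀ᵐ t, t ∈ Ioo a b → deriv f t ≤ 0) : f b ≤ f a := by
  rw [← sub_nonpos, ← hf.integral_deriv_eq_sub, ← neg_nonneg, ← intervalIntegral.integral_neg]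
  refine intervalIntegral.integral_nonneg_of_ae_restrict hab ?_
  rw [EventuallyLE, ← ae_restrict_congr_set Ioo_ae_eq_Icc, ae_restrict_iff' measurableSet_Ioo]
  filter_upwards [hd] with t ht htI using neg_nonneg.mpr (ht htI)

theorem AbsolutelyContinuousOnInterval.le_exp_mul_of_ae_deriv_le {f : ℝ → ℝ} {a b L : ℝ}
    (hf : AbsolutelyContinuousOnInterval f a b) (hab : a ≤ b)
    (hd : ∀ᵐ t, t ∈ Ioo a b → deriv f t ≤ L * f t) :
    f b ≤ Real.exp (L * (b - a)) * f a := by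
  set g : ℝ → ℝ := fun t => Real.exp (-L * t) * f t
  have hexp : ContDiff ℝ 1 fun t : ℝ => Real.exp (-L * t) := by fun_prop
  have hg : AbsolutelyContinuousOnInterval g a b :=
    hexp.contDiffOn.absolutelyContinuousOnInterval.mul hf
  have hgd : ∀ᵐ t, t ∈ Ioo a b → deriv g t ≤ 0 := by
    filter_upwards [hd, hf.ae_differentiableAt] with t hdt hft ht
    have hlin : HasDerivAt (fun t => -L * t) (-L) t := by
      simpa using (hasDerivAt_id t).const_mul (-L)
    have hgt : HasDerivAt g (Real.exp (-L * t) * (deriv f t - L * f t)) t :=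
      (hlin.exp.mul (hft (Ioo_subset_Icc_self.trans Icc_subset_uIcc ht)).hasDerivAt).congr_deriv
        (by ring)
    rw [hgt.deriv]
    exact mul_nonpos_of_nonneg_of_nonpos (Real.exp_pos _).le (sub_nonpos.mpr (hdt ht))
  have hgab := hg.le_of_ae_deriv_nonpos hab hgd
  simp only [g] at hgab
  calc f b = Real.exp (L * b) * (Real.exp (-L * b) * f b) := by
        rw [← mul_assoc, ← Real.exp_add]; simp
    _ ≤ Real.exp (L * b) * (Real.exp (-L * a) * f a) := by gcongr
    _ = Real.exp (L * (b - a)) * f a := by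
        rw [← mul_assoc, ← Real.exp_add]
        ring_nf

theorem ae_hasDerivAt_of_eq_add_integral {E : Type*} [NormedAddCommGroup E] [NormedSpace ℝ E]
    [CompleteSpace E] {y w : ℝ → E} {a b : ℝ} (hw : IntervalIntegrable w volume a b)
    (hy : ∀ t ∈ Icc a b, y t = y a + ∫ s in a..t, w s) :
    ∀ᵐ t, t ∈ Ioo a b → HasDerivAt y (w t) t := by
  filter_upwards [hw.ae_hasDerivAt_integral] with t ht htI
  refine ((ht (Ioo_subset_Icc_self.trans Icc_subset_uIcc htI) a left_mem_uIcc).const_add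
    (y a)).congr_of_eventuallyEq ?_
  filter_upwards [Icc_mem_nhds htI.1 htI.2] with s hs using hy s hs

theorem AbsolutelyContinuousOnInterval.of_eq_add_integral {E : Type*} [NormedAddCommGroup E]
    [NormedSpace ℝ E] {y w : ℝ → E} {a b B : ℝ} (hab : a ≤ b) (hw : IntervalIntegrable w volume a b)
    (hB : ∀ s ∈ Icc a b, ‖w s‖ ≤ B) (hy : ∀ t ∈ Icc a b, y t = y a + ∫ s in a..t, w s) :
    AbsolutelyContinuousOnInterval y a b := by
  have hint (r : ℝ) (hr : r ∈ Icc a b) : IntervalIntegrable w volume a r :=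
    hw.mono_set (uIcc_subset_uIcc left_mem_uIcc (Icc_subset_uIcc hr))
  have hlip : LipschitzOnWith (Real.toNNReal B) y (uIcc a b) := by
    rw [uIcc_of_le hab]
    refine LipschitzOnWith.of_dist_le' fun s hs t ht => ?_
    rw [dist_eq_norm, hy s hs, hy t ht, add_sub_add_left_eq_sub,
      intervalIntegral.integral_interval_sub_left (hint s hs) (hint t ht), Real.dist_eq]
    refine (intervalIntegral.norm_integral_le_of_norm_le_const fun r hr => ?_).trans
      (by gcongr)
    exact hB r (uIcc_subset_Icc ht hs (uIoc_subset_uIcc hr))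
  exact hlip.absolutelyContinuousOnInterval

theorem HasDerivAt.eq_of_eventuallyLE_of_eq {f g : ℝ → ℝ} {f' g' t : ℝ} (hf : HasDerivAt f f' t)
    (hg : HasDerivAt g g' t) (hle : g ≤ᶠ[𝓝 t] f) (heq : g t = f t) : f' = g' := by
  have hmin : IsLocalMin (fun s => f s - g s) t := by
    filter_upwards [hle] with s hs
    linarith
  linarith [hmin.hasDerivAt_eq_zero (hf.sub hg)]

section PosPart

variable {ι : Type*} [Fintype ι]

theorem Pi.lipschitzWith_posPart : LipschitzWith 1 (posPart : (ι → ℝ) → ι → ℝ) :=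
  LipschitzWith.of_dist_le_mul fun v w => by
    rw [NNReal.coe_one, one_mul, dist_pi_le_iff dist_nonneg]
    exact fun i => ((_root_.lipschitzWith_posPart (α := ℝ)).dist_le_mul (v i) (w i)).trans
      (by simpa using dist_le_pi_dist v w i)

theorem apply_le_norm_posPart (v : ι → ℝ) (i : ι) : v i ≤ ‖v⁺‖ :=
  calc v i ≤ (v i)⁺ := le_posPart (v i)
    _ ≤ ‖(v⁺) i‖ := le_abs_self _
    _ ≤ ‖v⁺‖ := norm_le_pi_norm _ i

theorem exists_apply_eq_norm_posPart {v : ι → ℝ} (hv : 0 < ‖v⁺‖) : ∃ i, v i = ‖v⁺‖ := by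
  by_contra! hne
  refine (lt_irrefl ‖v⁺‖) ((pi_norm_lt_iff hv).mpr fun i => ?_)
  change ‖(v i)⁺‖ < _
  rw [Real.norm_of_nonneg (posPart_nonneg (v i))]
  exact max_lt ((apply_le_norm_posPart v i).lt_of_ne (hne i)) hv

theorem HasDerivAt.le_mul_norm_posPart {z : ℝ → ι → ℝ} {z' : ι → ℝ} {p' L t : ℝ}
    (hz : HasDerivAt z z' t) (hp : HasDerivAt (fun s => ‖(z s)⁺‖) p' t)
    (hactive : ∀ i, z t i = ‖(z t)⁺‖ → z' i ≤ L * ‖(z t)⁺‖) : p' ≤ L * ‖(z t)⁺‖ := by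
  rcases (norm_nonneg (z t)⁺).eq_or_lt with hzero | hpos
  · have hp' := hp.eq_of_eventuallyLE_of_eq (hasDerivAt_const t 0)
      (.of_forall fun s => norm_nonneg _) hzero
    rw [hp', ← hzero, mul_zero]
  · obtain ⟨i, hi⟩ := exists_apply_eq_norm_posPart hpos
    rw [hp.eq_of_eventuallyLE_of_eq (hasDerivAt_pi.mp hz i)
      (.of_forall fun s => apply_le_norm_posPart (z s) i) hi]
    exact hactive i hi

end PosPart

theorem mulVec_apply_le_of_offDiag_nonneg {ι : Type*} [Fintype ι]
    {A : Matrix ι ι ℝ} {v : ι → ℝ} {i : ι} {P K : ℝ} (hoff : ∀ j, i ≠ j → 0 ≤ A i j)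
    (hA : ∀ j, |A i j| ≤ K) (hv : ∀ j, v j ≤ P) (hvi : v i = P) (hP : 0 ≤ P) :
    (A *ᵥ v) i ≤ Fintype.card ι * K * P := by
  have hterm (j : ι) : A i j * v j ≤ K * P := by
    calc A i j * v j ≤ |A i j| * P := by
          rcases eq_or_ne i j with rfl | hij
          · rw [hvi]; exact mul_le_mul_of_nonneg_right (le_abs_self _) hP
          · rw [abs_of_nonneg (hoff j hij)]
            exact mul_le_mul_of_nonneg_left (hv j) (hoff j hij)
      _ ≤ K * P := mul_le_mul_of_nonneg_right (hA j) hP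
  calc (A *ᵥ v) i = ∑ j, A i j * v j := rfl
    _ ≤ ∑ _j : ι, K * P := Finset.sum_le_sum fun j _ => hterm j
    _ = Fintype.card ι * K * P := by simp [mul_assoc]

theorem norm_mulVec_le_of_abs_le {ι : Type*} [Fintype ι] {A : Matrix ι ι ℝ} {v : ι → ℝ}
    {K B : ℝ} (hA : ∀ i j, |A i j| ≤ K) (hv : ‖v‖ ≤ B) : ‖A *ᵥ v‖ ≤ Fintype.card ι * K * B := by
  cases isEmpty_or_nonempty ι
  · simp [Subsingleton.elim (A *ᵥ v) 0]
  have hK : 0 ≤ K := (abs_nonneg _).trans (hA (Classical.arbitrary ι) (Classical.arbitrary ι))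
  refine (pi_norm_le_iff_of_nonempty _).mpr fun i => ?_
  calc ‖(A *ᵥ v) i‖ = |∑ j, A i j * v j| := rfl
    _ ≤ ∑ j, |A i j| * |v j| := by
        simpa only [abs_mul] using Finset.abs_sum_le_sum_abs (fun j => A i j * v j) Finset.univ
    _ ≤ ∑ _j : ι, K * B := Finset.sum_le_sum fun j _ =>
        mul_le_mul (hA i j) ((norm_le_pi_norm v j).trans hv) (abs_nonneg _) hK
    _ = Fintype.card ι * K * B := by simp [mul_assoc]

theorem exists_bound_intervalIntegrable_mulVec_add {ι : Type*} [Fintype ι]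
    {A : ℝ → Matrix ι ι ℝ} {v c : ℝ → ι → ℝ} {a b : ℝ} (hab : a ≤ b)
    (hAm : AEStronglyMeasurable A (volume.restrict (Icc a b)))
    (hcm : AEStronglyMeasurable c (volume.restrict (Icc a b)))
    (hA : ∃ K, ∀ t ∈ Icc a b, ∀ i j, |A t i j| ≤ K) (hc : ∃ B, ∀ t ∈ Icc a b, ‖c t‖ ≤ B)
    (hv : ContinuousOn v (Icc a b)) :
    ∃ B, (∀ t ∈ Icc a b, ‖A t *ᵥ v t + c t‖ ≤ B) ∧
      IntervalIntegrable (fun t => A t *ᵥ v t + c t) volume a b := by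
  obtain ⟨K, hK⟩ := hA
  obtain ⟨Bc, hBc⟩ := hc
  obtain ⟨Bv, hBv⟩ := isCompact_Icc.exists_bound_of_continuousOn hv
  have hB (t : ℝ) (ht : t ∈ Icc a b) : ‖A t *ᵥ v t + c t‖ ≤ Fintype.card ι * K * Bv + Bc :=
    (norm_add_le _ _).trans
      (add_le_add (norm_mulVec_le_of_abs_le (hK t ht) (hBv t ht)) (hBc t ht))
  have hm : AEStronglyMeasurable (fun t => A t *ᵥ v t + c t) (volume.restrict (Icc a b)) :=
    ((continuous_fst.matrix_mulVec continuous_snd).comp_aestronglyMeasurable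
      (hAm.prodMk (hv.aestronglyMeasurable measurableSet_Icc))).add hcm
  exact ⟨_, hB, (intervalIntegrable_iff_integrableOn_Icc_of_le hab).mpr
    (IntegrableOn.of_bound measure_Icc_lt_top hm _
      ((ae_restrict_iff' measurableSet_Icc).mpr (.of_forall hB)))⟩

theorem HasDerivAt.le_card_mul_norm_posPart_of_offDiag_nonneg {ι : Type*} [Fintype ι]
    {z : ℝ → ι → ℝ} {z' : ι → ℝ} {A : Matrix ι ι ℝ} {p' K t : ℝ} (hz : HasDerivAt z z' t)
    (hp : HasDerivAt (fun s => ‖(z s)⁺‖) p' t) (hoff : ∀ i j, i ≠ j → 0 ≤ A i j)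
    (hA : ∀ i j, |A i j| ≤ K) (hz' : ∀ i, z' i ≤ (A *ᵥ z t) i) :
    p' ≤ Fintype.card ι * K * ‖(z t)⁺‖ :=
  hz.le_mul_norm_posPart hp fun i hi => (hz' i).trans
    (mulVec_apply_le_of_offDiag_nonneg (hoff i) (hA i) (apply_le_norm_posPart _) hi (norm_nonneg _))

/-- Comparison theorem for quasimonotone linear differential inequalities: if `J(t)` is bounded
measurable with nonnegative off-diagonal entries, `x` is absolutely continuous with
`x'(t) ≤ J(t)x(t) + C(t)` componentwise a.e., and `y` is a weak solution of
`y' = J(t)y + C(t)` with `y(0) ≥ x(0)`, then `x(t) ≤ y(t)` componentwise on `[0,T]`. -/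
theorem le_of_quasimonotone_differential_ineq
    {n : ℕ} (T : ℝ) (hT : 0 < T)
    (J : ℝ → Matrix (Fin n) (Fin n) ℝ) (C : ℝ → Fin n → ℝ) (x y : ℝ → Fin n → ℝ)
    (hJmeas : AEStronglyMeasurable J (volume.restrict (Icc (0:ℝ) T)))
    (hCmeas : AEStronglyMeasurable C (volume.restrict (Icc (0:ℝ) T)))
    (hJbd : ∃ M, ∀ t ∈ Icc (0:ℝ) T, ∀ i j, |J t i j| ≤ M)
    (hCbd : ∃ M, ∀ t ∈ Icc (0:ℝ) T, ‖C t‖ ≤ M)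
    (hJoff : ∀ t ∈ Icc (0:ℝ) T, ∀ i j, i ≠ j → 0 ≤ J t i j)
    (hxAC : AbsolutelyContinuousOn x 0 T)
    (hx' : ∀ᵐ t ∂(volume.restrict (Icc (0:ℝ) T)),
      ∀ d : Fin n → ℝ, HasDerivWithinAt x d (Icc (0:ℝ) T) t →
        ∀ i, d i ≤ ((J t).mulVec (x t) + C t) i)
    (hycont : ContinuousOn y (Icc (0:ℝ) T))
    (hy : ∀ t ∈ Icc (0:ℝ) T,
      y t = y 0 + ∫ s in (0:ℝ)..t, ((J s).mulVec (y s) + C s))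
    (hy0 : ∀ i, x 0 i ≤ y 0 i) :
    ∀ t ∈ Icc (0:ℝ) T, ∀ i, x t i ≤ y t i := by
  obtain ⟨B, hwB, hw⟩ :=
    exists_bound_intervalIntegrable_mulVec_add hT.le hJmeas hCmeas hJbd hCbd hycont
  obtain ⟨M, hM⟩ := hJbd
  have hxAC' := hxAC.absolutelyContinuousOnInterval hT.le
  have hyAC := AbsolutelyContinuousOnInterval.of_eq_add_integral hT.le hw hwB hy
  set p : ℝ → ℝ := fun t => ‖(x t - y t)⁺‖
  have hpAC : AbsolutelyContinuousOnInterval p 0 T :=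
    (lipschitzWith_one_norm.comp Pi.lipschitzWith_posPart).comp_absolutelyContinuousOnInterval
      (hxAC'.sub hyAC)
  have hpd : ∀ᵐ t, t ∈ Ioo 0 T → deriv p t ≤ Fintype.card (Fin n) * M * p t := by
    filter_upwards [hpAC.ae_differentiableAt, hxAC'.ae_differentiableAt_pi,
      ae_hasDerivAt_of_eq_add_integral hw hy, (ae_restrict_iff' measurableSet_Icc).mp hx']
      with t hpt hxt hyt hx't ht
    have htI : t ∈ Icc 0 T := Ioo_subset_Icc_self ht
    have hxd := (hxt (Icc_subset_uIcc htI)).hasDerivAt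
    refine (hxd.sub (hyt ht)).le_card_mul_norm_posPart_of_offDiag_nonneg
      (hpt (Icc_subset_uIcc htI)).hasDerivAt (hJoff t htI) (hM t htI) fun i => ?_
    have hxi := hx't htI _ hxd.hasDerivWithinAt i
    simp only [Pi.sub_apply, mulVec_sub, Pi.add_apply] at hxi ⊢
    linarith
  intro t ht i
  have hp0 : p 0 = 0 := by
    simp [p, posPart_eq_zero.mpr (sub_nonpos.mpr (show x 0 ≤ y 0 from hy0))]
  have hpt := (hpAC.mono (uIcc_subset_uIcc left_mem_uIcc (Icc_subset_uIcc ht))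
    ).le_exp_mul_of_ae_deriv_le ht.1
    (by filter_upwards [hpd] with s hs hsI using hs ⟨hsI.1, hsI.2.trans_le ht.2⟩)
  rw [hp0, mul_zero] at hpt
  have hzi : x t i - y t i ≤ p t := apply_le_norm_posPart (x t - y t) i
  linarith
end

section
/- Let B : [0,T] → ℝ^{n×n} be bounded measurable with all entries nonnegative, Λ a diagonal matrix, and C bounded measurable. Suppose x, y : [0,T] → ℝ^n are continuous, x satisfies x(t) ≤ e^{−Λt}x(0) + ∫₀ᵗ e^{−Λ(t−s)}(B(s)x(s)+C(s)) ds componentwise, y satisfies the corresponding integral equation with equality, and y(0) > x(0) strictly componentwise. Then x(t) < y(t) strictly componentwise for all t ∈ [0,T]. -/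
/-!
Let `t₀` be the first time at which some component of `y - x` fails to be positive. On `[0, t₀]` we have
`x ≤ y`, so, `B` being nonnegative, the integral term for `y` at `t₀` dominates the one for `x`,
while the free term `e^{-Λ t₀}(y(0) - x(0))` is strictly positive. Hence `x(t₀) < y(t₀)`
componentwise, contradicting the choice of `t₀`.
-/

open Set MeasureTheory
open scoped Matrix

namespace Matrix

variable {ι : Type*} [Fintype ι]

theorem abs_mulVec_apply_le {A : Matrix ι ι ℝ} {v : ι → ℝ} {M K : ℝ} {i : ι}
    (hA : ∀ j, |A i j| ≤ M) (hv : ‖v‖ ≤ K) :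
    |(A *ᵥ v) i| ≤ Fintype.card ι * (M * K) := by
  calc |(A *ᵥ v) i| ≤ ∑ j, |A i j * v j| := Finset.abs_sum_le_sum_abs _ _
    _ ≤ ∑ _j : ι, M * K := Finset.sum_le_sum fun j _ => by
        rw [abs_mul]
        exact mul_le_mul (hA j) ((norm_le_pi_norm v j).trans hv) (abs_nonneg _)
          ((abs_nonneg _).trans (hA j))
    _ = Fintype.card ι * (M * K) := by simp

theorem mulVec_apply_le_mulVec_apply {A : Matrix ι ι ℝ} {v w : ι → ℝ} {i : ι}
    (hA : ∀ j, 0 ≤ A i j) (hvw : ∀ j, v j ≤ w j) : (A *ᵥ v) i ≤ (A *ᵥ w) i :=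
  Finset.sum_le_sum fun j _ => mul_le_mul_of_nonneg_left (hvw j) (hA j)

end Matrix

theorem ContinuousOn.forall_Icc_apply_pos {ι : Type*} [Finite ι] {a b : ℝ} {z : ℝ → ι → ℝ}
    (hz : ContinuousOn z (Icc a b)) (ha : ∀ i, 0 < z a i)
    (hstep : ∀ t ∈ Ioc a b, (∀ s ∈ Icc a t, ∀ i, 0 ≤ z s i) → ∀ i, 0 < z t i) :
    ∀ t ∈ Icc a b, ∀ i, 0 < z t i := by
  set S := Icc a b ∩ z ⁻¹' (univ.pi fun _ => Ioi 0)ᶜ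
  have hS : IsClosed S := hz.preimage_isClosed_of_isClosed isClosed_Icc
    (isOpen_set_pi finite_univ fun _ _ => isOpen_Ioi).isClosed_compl
  by_contra! hcross
  obtain ⟨t, ht, i, hti⟩ := hcross
  have hbdd : BddBelow S := ⟨a, fun s hs => hs.1.1⟩
  set t₀ := sInf S
  have ht₀ : t₀ ∈ S := hS.csInf_mem ⟨t, ht, fun h => (h i trivial).not_ge hti⟩ hbdd
  have ha₀ : a < t₀ := ht₀.1.1.lt_of_ne fun h => ht₀.2 (h ▸ fun i _ => ha i)
  have hbefore : Ico a t₀ ⊆ Icc a b ∩ z ⁻¹' univ.pi fun _ => Ici 0 := fun s hs =>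
    have hs' : s ∈ Icc a b := ⟨hs.1, hs.2.le.trans ht₀.1.2⟩
    have hpos : z s ∈ univ.pi fun _ => Ioi 0 :=
      not_not.1 fun h => hs.2.not_ge (csInf_le hbdd ⟨hs', h⟩)
    ⟨hs', fun j _ => mem_Ici.2 (hpos j trivial).le⟩
  have hnonneg := ((hz.preimage_isClosed_of_isClosed isClosed_Icc
    (isClosed_set_pi fun _ _ => isClosed_Ici)).closure_subset_iff.2 hbefore)
  rw [closure_Ico ha₀.ne] at hnonneg
  exact ht₀.2 fun j _ =>
    hstep _ ⟨ha₀, ht₀.1.2⟩ (fun s hs k => (hnonneg hs).2 k trivial) j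

theorem integrableOn_mulVec_apply_add {ι α : Type*} [Fintype ι] [MeasurableSpace α]
    {μ : Measure α} {s : Set α} (hs : MeasurableSet s) (hμs : μ s < ⊤)
    {B : α → Matrix ι ι ℝ} {v C : α → ι → ℝ}
    (hB : AEStronglyMeasurable B (μ.restrict s)) (hv : AEStronglyMeasurable v (μ.restrict s))
    (hC : AEStronglyMeasurable C (μ.restrict s))
    (hBbd : ∃ M, ∀ a ∈ s, ∀ i j, |B a i j| ≤ M) (hvbd : ∃ K, ∀ a ∈ s, ‖v a‖ ≤ K)
    (hCbd : ∃ M, ∀ a ∈ s, ‖C a‖ ≤ M) (i : ι) :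
    IntegrableOn (fun a => (B a *ᵥ v a) i + C a i) s μ := by
  obtain ⟨M, hM⟩ := hBbd
  obtain ⟨K, hK⟩ := hvbd
  obtain ⟨MC, hMC⟩ := hCbd
  have hmeas : AEStronglyMeasurable (fun a => (B a *ᵥ v a) i + C a i) (μ.restrict s) :=
    ((continuous_apply i).comp_aestronglyMeasurable
      ((continuous_fst.matrix_mulVec continuous_snd).comp_aestronglyMeasurable₂ hB hv)).add
      ((continuous_apply i).comp_aestronglyMeasurable hC)
  refine IntegrableOn.of_bound hμs hmeas (Fintype.card ι * (M * K) + MC)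
    (ae_restrict_of_forall_mem hs fun a ha => ?_)
  rw [Real.norm_eq_abs]
  exact (abs_add_le _ _).trans (add_le_add (Matrix.abs_mulVec_apply_le (hM a ha i) (hK a ha))
    ((norm_le_pi_norm (C a) i).trans (hMC a ha)))

theorem MeasureTheory.IntegrableOn.intervalIntegrable_exp_mul {g : ℝ → ℝ} {c T t : ℝ}
    (hg : IntegrableOn g (Icc 0 T)) (ht : t ∈ Icc 0 T) :
    IntervalIntegrable (fun s => Real.exp (c * (t - s)) * g s) volume 0 t := by
  refine ((hg.continuousOn_mul (by fun_prop) isCompact_Icc).mono_set ?_).intervalIntegrable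
  rw [uIcc_of_le ht.1]
  exact Icc_subset_Icc_right ht.2

section Duhamel

variable {ι : Type*} [Fintype ι]

/-- The right-hand side of the variation-of-constants formula for `w' = -Λ w + B w + C`. -/
noncomputable def duhamel (Λ : ι → ℝ) (B : ℝ → Matrix ι ι ℝ) (C w : ℝ → ι → ℝ) (t : ℝ)
    (i : ι) : ℝ :=
  Real.exp (-Λ i * t) * w 0 i +
    ∫ s in (0:ℝ)..t, Real.exp (-Λ i * (t - s)) * ((B s *ᵥ w s) i + C s i)

theorem duhamel_lt_duhamel {Λ : ι → ℝ} {B : ℝ → Matrix ι ι ℝ} {C w₁ w₂ : ℝ → ι → ℝ} {t : ℝ}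
    {i : ι} (ht : 0 ≤ t) (hB : ∀ s ∈ Icc 0 t, ∀ j, 0 ≤ B s i j)
    (hw : ∀ s ∈ Icc 0 t, ∀ j, w₁ s j ≤ w₂ s j) (h0 : w₁ 0 i < w₂ 0 i)
    (h₁ : IntervalIntegrable
      (fun s => Real.exp (-Λ i * (t - s)) * ((B s *ᵥ w₁ s) i + C s i)) volume 0 t)
    (h₂ : IntervalIntegrable
      (fun s => Real.exp (-Λ i * (t - s)) * ((B s *ᵥ w₂ s) i + C s i)) volume 0 t) :
    duhamel Λ B C w₁ t i < duhamel Λ B C w₂ t i :=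
  add_lt_add_of_lt_of_le (mul_lt_mul_of_pos_left h0 (Real.exp_pos _))
    (intervalIntegral.integral_mono_on ht h₁ h₂ fun s hs =>
      mul_le_mul_of_nonneg_left
        (add_le_add_left (Matrix.mulVec_apply_le_mulVec_apply (hB s hs) (hw s hs)) _)
        (Real.exp_pos _).le)

end Duhamel

theorem lt_of_integral_ineq_lt_general
    {n : ℕ} (T : ℝ)
    (B : ℝ → Matrix (Fin n) (Fin n) ℝ) (C : ℝ → Fin n → ℝ)
    (Λ : Fin n → ℝ) (x y : ℝ → Fin n → ℝ)
    (hBmeas : AEStronglyMeasurable B (volume.restrict (Icc (0:ℝ) T)))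
    (hCmeas : AEStronglyMeasurable C (volume.restrict (Icc (0:ℝ) T)))
    (hBbd : ∃ M, ∀ t ∈ Icc (0:ℝ) T, ∀ i j, |B t i j| ≤ M)
    (hCbd : ∃ M, ∀ t ∈ Icc (0:ℝ) T, ‖C t‖ ≤ M)
    (hBpos : ∀ t ∈ Icc (0:ℝ) T, ∀ i j, 0 ≤ B t i j)
    (hxcont : ContinuousOn x (Icc (0:ℝ) T))
    (hycont : ContinuousOn y (Icc (0:ℝ) T))
    (hx : ∀ t ∈ Icc (0:ℝ) T, ∀ i, x t i ≤
      Real.exp (-Λ i * t) * x 0 i +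
      ∫ s in (0:ℝ)..t, Real.exp (-Λ i * (t - s)) * (((B s).mulVec (x s)) i + C s i))
    (hy : ∀ t ∈ Icc (0:ℝ) T, ∀ i, y t i =
      Real.exp (-Λ i * t) * y 0 i +
      ∫ s in (0:ℝ)..t, Real.exp (-Λ i * (t - s)) * (((B s).mulVec (y s)) i + C s i))
    (h0 : ∀ i, x 0 i < y 0 i) :
    ∀ t ∈ Icc (0:ℝ) T, ∀ i, x t i < y t i := by
  have hint : ∀ w, ContinuousOn w (Icc 0 T) → ∀ t ∈ Icc 0 T, ∀ i, IntervalIntegrable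
      (fun s => Real.exp (-Λ i * (t - s)) * ((B s *ᵥ w s) i + C s i)) volume 0 t :=
    fun w hw t ht i =>
      (integrableOn_mulVec_apply_add measurableSet_Icc measure_Icc_lt_top hBmeas
        (hw.aestronglyMeasurable measurableSet_Icc) hCmeas hBbd
        (isCompact_Icc.exists_bound_of_continuousOn hw) hCbd i).intervalIntegrable_exp_mul ht
  have hpos := ContinuousOn.forall_Icc_apply_pos (z := fun t i => y t i - x t i)
    (hycont.sub hxcont) (fun i => sub_pos.2 (h0 i)) fun t ht hle i => by
      have ht' : t ∈ Icc 0 T := Ioc_subset_Icc_self ht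
      have hsub : Icc 0 t ⊆ Icc 0 T := Icc_subset_Icc_right ht.2
      have hlt : duhamel Λ B C x t i < duhamel Λ B C y t i :=
        duhamel_lt_duhamel ht.1.le (fun s hs => hBpos s (hsub hs) i)
          (fun s hs j => sub_nonneg.1 (hle s hs j)) (h0 i) (hint x hxcont t ht' i)
          (hint y hycont t ht' i)
      rw [sub_pos, hy t ht' i]
      exact (hx t ht' i).trans_lt hlt
  exact fun t ht i => sub_pos.1 (hpos t ht i)

/-- First-crossing comparison for integral inequalities: if `B(t)` is bounded measurable with
all entries nonnegative, `Λ` diagonal, `x` satisfies the componentwise integral inequality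
`x(t) ≤ e^{-Λt}x(0) + ∫₀ᵗ e^{-Λ(t-s)}(B(s)x(s)+C(s)) ds`, `y` satisfies the corresponding
integral equation with equality, and `y(0) > x(0)` strictly componentwise, then `x(t) < y(t)`
strictly componentwise on `[0,T]`. -/
theorem lt_of_integral_ineq_lt
    {n : ℕ} (T : ℝ) (hT : 0 < T)
    (B : ℝ → Matrix (Fin n) (Fin n) ℝ) (C : ℝ → Fin n → ℝ)
    (Λ : Fin n → ℝ) (x y : ℝ → Fin n → ℝ)
    (hBmeas : AEStronglyMeasurable B (volume.restrict (Icc (0:ℝ) T)))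
    (hCmeas : AEStronglyMeasurable C (volume.restrict (Icc (0:ℝ) T)))
    (hBbd : ∃ M, ∀ t ∈ Icc (0:ℝ) T, ∀ i j, |B t i j| ≤ M)
    (hCbd : ∃ M, ∀ t ∈ Icc (0:ℝ) T, ‖C t‖ ≤ M)
    (hBpos : ∀ t ∈ Icc (0:ℝ) T, ∀ i j, 0 ≤ B t i j)
    (hxcont : ContinuousOn x (Icc (0:ℝ) T))
    (hycont : ContinuousOn y (Icc (0:ℝ) T))
    (hx : ∀ t ∈ Icc (0:ℝ) T, ∀ i, x t i ≤
      Real.exp (-Λ i * t) * x 0 i +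
      ∫ s in (0:ℝ)..t, Real.exp (-Λ i * (t - s)) * (((B s).mulVec (x s)) i + C s i))
    (hy : ∀ t ∈ Icc (0:ℝ) T, ∀ i, y t i =
      Real.exp (-Λ i * t) * y 0 i +
      ∫ s in (0:ℝ)..t, Real.exp (-Λ i * (t - s)) * (((B s).mulVec (y s)) i + C s i))
    (h0 : ∀ i, x 0 i < y 0 i) :
    ∀ t ∈ Icc (0:ℝ) T, ∀ i, x t i < y t i :=
  lt_of_integral_ineq_lt_general T B C Λ x y hBmeas hCmeas hBbd hCbd hBpos hxcont hycont hx hy h0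
end

section
/- Let f : ℝ^n × ℝ^m → ℝ^n be C¹, y : [t₀,t₀+h] → ℝ^m bounded measurable with image in a convex set [W_y], and y_c ∈ [W_y]. Let x₁ solve x₁' = f(x₁, y_c), x₁(t₀)=x₀, and x₂ be a weak solution of x₂' = f(x₂, y(t)), x₂(t₀)=x̄₀, with x₁(t) ∈ [W₁] ⊆ [W₂] and x₂(t) ∈ [W₂] for all t, where [W₁], [W₂] are convex compact. Define C ∈ ℝ^n by C_i ≥ sup{|f_i(x,y_c) − f_i(x,y)| : x ∈ [W₁], y ∈ [W_y]} and J ∈ ℝ^{n×n} by J_{ii} ≥ sup μ(∂f_i/∂x_i) over [W₂]×[W_y] and J_{ij} ≥ sup ‖∂f_i/∂x_j‖ over [W₂]×[W_y] for i≠j. Then for all t ∈ [t₀,t₀+h] and all i: |x₁,ᵢ(t) − x₂,ᵢ(t)| ≤ (e^{J(t−t₀)}·|x₀ − x̄₀|)_i + (∫_{t₀}^t e^{J(t−s)} C ds)_i. -/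
/-!
Write `Δ = x₁ - x₂` and split `f(x₁, y_c) - f(x₂, y)` as
`[f(x₁, y_c) - f(x₁, y)] + [f(x₁, y) - f(x₂, y)]`. The first bracket is bounded by `C`. For the
second, the mean value theorem along the segment `[x₂, x₁] ⊆ W₂` gives
`σ (f(x₁, y) - f(x₂, y))ᵢ ≤ (J |Δ|)ᵢ` whenever `σ = ±1` and `σ Δᵢ = |Δᵢ|`: the `i`-th partial
derivative gets multiplied by `|Δᵢ| ≥ 0`, so the one-sided bound `J i i` (the logarithmic norm)
suffices for it, while the other partial derivatives need bounds on their size.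

Since the off-diagonal entries of `J` are nonnegative, `exp (τ J)` (for `τ ≥ 0`) is entrywise
nonnegative and has a positive diagonal. Compare `|Δ|` with the solution `v` of `v' = J v + D`,
`v(t₀) = w`, where `w = |Δ(t₀)| + ε` and `D = C + ε`. At the first time `T` at which some `|Δₐ|`
reaches `vₐ > 0`, `Δₐ` keeps its sign just before `T`. Integrating the two bounds over a short
interval `[s, T]` then shows that `|Δₐ|` grows strictly less than `vₐ`, which is a contradiction.
Finally let `ε → 0`.
-/

section ComparisonPrinciple

open Set MeasureTheory Filter Topology NormedSpace Matrix

theorem intervalIntegral.eval_integral {ι E : Type*} [Fintype ι] [NormedAddCommGroup E]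
    [NormedSpace ℝ E] [CompleteSpace E] {f : ℝ → ι → E} {μ : Measure ℝ} {a b : ℝ}
    (hf : IntervalIntegrable f μ a b) (i : ι) :
    (∫ x in a..b, f x ∂μ) i = ∫ x in a..b, f x i ∂μ :=
  ((ContinuousLinearMap.proj (R := ℝ) (φ := fun _ : ι => E) i).intervalIntegral_comp_comm hf).symm

theorem sub_eq_integral_of_eq_add_integral {E : Type*} [NormedAddCommGroup E] [NormedSpace ℝ E]
    {x F : ℝ → E} {x₀ : E} {t₀ t₁ : ℝ} (hF : IntegrableOn F (Icc t₀ t₁))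
    (hx : ∀ t ∈ Icc t₀ t₁, x t = x₀ + ∫ s in t₀..t, F s) {a b : ℝ}
    (ha : a ∈ Icc t₀ t₁) (hb : b ∈ Icc t₀ t₁) : x b - x a = ∫ s in a..b, F s := by
  have hint : ∀ t ∈ Icc t₀ t₁, IntervalIntegrable F volume t₀ t := fun t ht =>
    (hF.mono_set (uIcc_subset_Icc ⟨le_rfl, ht.1.trans ht.2⟩ ht)).intervalIntegrable
  rw [hx b hb, hx a ha, add_sub_add_left_eq_sub,
    intervalIntegral.integral_interval_sub_left (hint b hb) (hint a ha)]

theorem sub_eq_add_integral_sub {E : Type*} [NormedAddCommGroup E] [NormedSpace ℝ E]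
    {x₁ x₂ F₁ F₂ : ℝ → E} {a₁ a₂ : E} {t₀ t₁ : ℝ} (hF₁ : IntegrableOn F₁ (Icc t₀ t₁))
    (hF₂ : IntegrableOn F₂ (Icc t₀ t₁)) (hx₁ : ∀ t ∈ Icc t₀ t₁, x₁ t = a₁ + ∫ s in t₀..t, F₁ s)
    (hx₂ : ∀ t ∈ Icc t₀ t₁, x₂ t = a₂ + ∫ s in t₀..t, F₂ s) :
    ∀ t ∈ Icc t₀ t₁, (x₁ - x₂) t = (a₁ - a₂) + ∫ s in t₀..t, (F₁ s - F₂ s) := by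
  intro t ht
  have hint : ∀ {F : ℝ → E}, IntegrableOn F (Icc t₀ t₁) → IntervalIntegrable F volume t₀ t :=
    fun hF => (intervalIntegrable_iff_integrableOn_Icc_of_le ht.1).2
      (hF.mono_set (Icc_subset_Icc_right ht.2))
  rw [Pi.sub_apply, hx₁ t ht, hx₂ t ht, intervalIntegral.integral_sub (hint hF₁) (hint hF₂)]
  abel

theorem continuousOn_of_eq_add_integral {E : Type*} [NormedAddCommGroup E] [NormedSpace ℝ E]
    {x F : ℝ → E} {x₀ : E} {t₀ t₁ : ℝ} (hF : IntegrableOn F (Icc t₀ t₁))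
    (hx : ∀ t ∈ Icc t₀ t₁, x t = x₀ + ∫ s in t₀..t, F s) : ContinuousOn x (Icc t₀ t₁) := by
  rcases le_or_gt t₀ t₁ with h | h
  · rw [← uIcc_of_le h] at hF ⊢
    exact (continuousOn_const.add (intervalIntegral.continuousOn_primitive_interval hF)).congr
      fun t ht => hx t (uIcc_of_le h ▸ ht)
  · simp [Icc_eq_empty_of_lt h]

theorem exists_Icc_subset_of_eventually_nhdsLE {p : ℝ → Prop} {T : ℝ}
    (h : ∀ᶠ r in 𝓝[≤] T, p r) : ∃ s < T, ∀ r ∈ Icc s T, p r := by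
  obtain ⟨l, hl, hlT⟩ := mem_nhdsLE_iff_exists_Ioc_subset.1 h
  obtain ⟨s, hls, hsT⟩ := exists_between (mem_Iio.1 hl)
  exact ⟨s, hsT, fun r hr => hlT ⟨hls.trans_le hr.1, hr.2⟩⟩

theorem integrableOn_Icc_comp_of_bounded {E F G : Type*} [NormedAddCommGroup E]
    [NormedAddCommGroup F] [ProperSpace F] [NormedAddCommGroup G] {φ : E × F → G}
    (hφ : Continuous φ) {x : ℝ → E} {y : ℝ → F} {a b M : ℝ} (hx : ContinuousOn x (Icc a b))
    (hy : AEStronglyMeasurable y (volume.restrict (Icc a b))) (hyM : ∀ t ∈ Icc a b, ‖y t‖ ≤ M) :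
    IntegrableOn (fun t => φ (x t, y t)) (Icc a b) := by
  obtain ⟨B, hB⟩ := ((isCompact_Icc.image_of_continuousOn hx).prod
    (isCompact_closedBall (0 : F) M)).exists_bound_of_continuousOn hφ.continuousOn
  refine IntegrableOn.of_bound measure_Icc_lt_top
    (hφ.comp_aestronglyMeasurable ((hx.aestronglyMeasurable measurableSet_Icc).prodMk hy)) B ?_
  filter_upwards [ae_restrict_mem measurableSet_Icc] with t ht
  exact hB _ ⟨mem_image_of_mem x ht, mem_closedBall_zero_iff.2 (hyM t ht)⟩

theorem exists_first_nonpos {κ : Type*} [Finite κ] {g : ℝ → κ → ℝ} {a b : ℝ}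
    (hg : ContinuousOn g (Icc a b)) (ha : ∀ i, 0 < g a i) (h : ∃ t ∈ Icc a b, ∃ i, g t i ≤ 0) :
    ∃ T ∈ Ioc a b, (∀ r ∈ Ico a T, ∀ i, 0 < g r i) ∧ (∀ i, 0 ≤ g T i) ∧ ∃ i, g T i = 0 := by
  set S := Icc a b ∩ g ⁻¹' {x | ∃ i, x i ≤ 0}
  have hS : IsClosed S := hg.preimage_isClosed_of_isClosed isClosed_Icc <| by
    simpa only [ofPred_exists] using
      isClosed_iUnion_of_finite fun i => isClosed_le (continuous_apply i) continuous_const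
  have hTS : sInf S ∈ S := hS.csInf_mem h (bddBelow_Icc.mono inter_subset_left)
  set T := sInf S
  obtain ⟨⟨hTa, hTb⟩, i, hi⟩ := hTS
  have haT : a < T := hTa.lt_of_ne fun hT => (ha i).not_ge (hT ▸ hi)
  have hpos : ∀ r ∈ Ico a T, ∀ i, 0 < g r i := fun r hr j => not_le.1 fun hj =>
    hr.2.not_ge (csInf_le (bddBelow_Icc.mono inter_subset_left) ⟨⟨hr.1, hr.2.le.trans hTb⟩, j, hj⟩)
  have hnonneg : ∀ j, 0 ≤ g T j := fun j =>
    ContinuousWithinAt.closure_le (f := fun _ : ℝ => (0 : ℝ))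
      (by rw [closure_Ico haT.ne]; exact right_mem_Icc.2 haT.le) continuousWithinAt_const
      ((((continuous_apply j).comp_continuousOn hg) T ⟨haT.le, hTb⟩).mono
        (Ico_subset_Icc_self.trans (Icc_subset_Icc_right hTb)))
      fun r hr => (hpos r hr j).le
  exact ⟨T, ⟨haT, hTb⟩, hpos, hnonneg, i, le_antisymm hi (hnonneg i)⟩

variable {ι : Type*}

def Matrix.IsMetzler (A : Matrix ι ι ℝ) : Prop :=
  ∀ i j, i ≠ j → 0 ≤ A i j

theorem Matrix.IsMetzler.smul {A : Matrix ι ι ℝ} (hA : A.IsMetzler) {c : ℝ} (hc : 0 ≤ c) :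
    (c • A).IsMetzler :=
  fun i j hij => mul_nonneg hc (hA i j hij)

variable [Fintype ι] [DecidableEq ι]

theorem Convex.image_sub_le_sum_mul_abs_sub {W : Set (ι → ℝ)} (hW : Convex ℝ W)
    {g : (ι → ℝ) → ℝ} (hg : ∀ x ∈ W, DifferentiableAt ℝ g x) {K : ι → ℝ} {i : ι}
    (hKi : ∀ x ∈ W, fderiv ℝ g x (Pi.single i 1) ≤ K i)
    (hK : ∀ j, j ≠ i → ∀ x ∈ W, |fderiv ℝ g x (Pi.single j 1)| ≤ K j)
    {a b : ι → ℝ} (ha : a ∈ W) (hb : b ∈ W) (hab : b i ≤ a i) :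
    g a - g b ≤ ∑ j, K j * |a j - b j| := by
  have hmem : ∀ θ ∈ Icc (0 : ℝ) 1, b + θ • (a - b) ∈ W := fun θ hθ => hW.add_smul_sub_mem hb ha hθ
  have hderiv : ∀ θ ∈ Icc (0 : ℝ) 1,
      HasDerivAt (fun θ : ℝ => g (b + θ • (a - b))) (fderiv ℝ g (b + θ • (a - b)) (a - b)) θ :=
    fun θ hθ => (hg _ (hmem θ hθ)).hasFDerivAt.comp_hasDerivAt θ
      (by simpa using ((hasDerivAt_id θ).smul_const (a - b)).const_add b)
  have hbound : ∀ x ∈ W, fderiv ℝ g x (a - b) ≤ ∑ j, K j * |a j - b j| := by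
    intro x hx
    conv_lhs => rw [pi_eq_sum_univ' (a - b)]
    simp only [map_sum, map_smul, smul_eq_mul, Pi.sub_apply]
    refine Finset.sum_le_sum fun j _ => ?_
    rcases eq_or_ne j i with rfl | hj
    · rw [abs_of_nonneg (sub_nonneg.2 hab), mul_comm (K j)]
      exact mul_le_mul_of_nonneg_left (hKi x hx) (sub_nonneg.2 hab)
    · calc (a j - b j) * fderiv ℝ g x (Pi.single j 1)
          ≤ |a j - b j| * |fderiv ℝ g x (Pi.single j 1)| := by rw [← abs_mul]; exact le_abs_self _
        _ ≤ K j * |a j - b j| := by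
          rw [mul_comm]; exact mul_le_mul_of_nonneg_right (hK j hj x hx) (abs_nonneg _)
  simpa using (convex_Icc (0 : ℝ) 1).image_sub_le_mul_sub_of_deriv_le
    (fun θ hθ => (hderiv θ hθ).continuousAt.continuousWithinAt)
    (fun θ hθ => (hderiv θ (interior_subset hθ)).differentiableAt.differentiableWithinAt)
    (fun θ hθ => (hderiv θ (interior_subset hθ)).deriv ▸ hbound _ (hmem θ (interior_subset hθ)))
    0 (left_mem_Icc.2 zero_le_one) 1 (right_mem_Icc.2 zero_le_one) zero_le_one

theorem Convex.mul_sub_le_mulVec_abs_sub {W : Set (ι → ℝ)} (hW : Convex ℝ W)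
    {g : (ι → ℝ) → ι → ℝ} {J : Matrix ι ι ℝ}
    (hg : ∀ k, ∀ x ∈ W, DifferentiableAt ℝ (fun v => g v k) x)
    (hdiag : ∀ k, ∀ x ∈ W, fderiv ℝ (fun v => g v k) x (Pi.single k 1) ≤ J k k)
    (hoff : ∀ k j, k ≠ j → ∀ x ∈ W, |fderiv ℝ (fun v => g v k) x (Pi.single j 1)| ≤ J k j)
    {a b : ι → ℝ} (ha : a ∈ W) (hb : b ∈ W) (k : ι) {σ : ℝ} (hσ : |σ| = 1)
    (hsign : σ * (a k - b k) = |a k - b k|) :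
    σ * (g a k - g b k) ≤ (J *ᵥ fun j => |a j - b j|) k := by
  have key : ∀ {a b}, a ∈ W → b ∈ W → b k ≤ a k →
      g a k - g b k ≤ (J *ᵥ fun j => |a j - b j|) k := fun ha hb hab =>
    hW.image_sub_le_sum_mul_abs_sub (hg k) (hdiag k) (fun j hj => hoff k j (Ne.symm hj)) ha hb hab
  rcases (abs_eq zero_le_one).1 hσ with rfl | rfl
  · rw [one_mul] at hsign ⊢
    exact key ha hb (sub_nonneg.1 (hsign ▸ abs_nonneg _))
  · rw [neg_one_mul, neg_sub, abs_sub_comm] at hsign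
    rw [neg_one_mul, neg_sub]
    simpa only [abs_sub_comm] using key hb ha (sub_nonneg.1 (hsign ▸ abs_nonneg _))

noncomputable def linearFlow (J : Matrix ι ι ℝ) (w D : ι → ℝ) (t₀ t : ℝ) : ι → ℝ :=
  exp ((t - t₀) • J) *ᵥ w + ∫ s in t₀..t, exp ((t - s) • J) *ᵥ D

variable (J : Matrix ι ι ℝ)

section MatrixExp

-- Any submultiplicative matrix norm will do here; `exp` itself only depends on the topology.
attribute [local instance] Matrix.linftyOpNormedAddCommGroup Matrix.linftyOpNormedRing
  Matrix.linftyOpNormedAlgebra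

theorem Matrix.one_apply_le_exp_apply {A : Matrix ι ι ℝ} (hA : ∀ i j, 0 ≤ A i j) (i j : ι) :
    (1 : Matrix ι ι ℝ) i j ≤ exp A i j := by
  have hsum := Pi.hasSum.1 (Pi.hasSum.1 (exp_series_hasSum_exp' (𝕂 := ℝ) A) i) j
  have hterm : ∀ k : ℕ, 0 ≤ ((k.factorial⁻¹ : ℝ) • A ^ k) i j := fun k =>
    mul_nonneg (by positivity) (pow_apply_nonneg hA k i j)
  calc (1 : Matrix ι ι ℝ) i j = ((Nat.factorial 0 : ℝ)⁻¹ • A ^ 0) i j := by simp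
    _ ≤ exp A i j := le_hasSum hsum 0 fun k _ => hterm k

theorem Matrix.exp_add_smul_one (A : Matrix ι ι ℝ) (c : ℝ) :
    exp (A + c • 1) = Real.exp c • exp A := by
  rw [exp_add_of_commute _ _ ((Commute.one_right A).smul_right c), ← Algebra.algebraMap_eq_smul_one,
    show exp (algebraMap ℝ (Matrix ι ι ℝ) c) = algebraMap ℝ _ (exp c) from
      (algebraMap_exp_comm c).symm, ← Real.exp_eq_exp_ℝ,
    Algebra.algebraMap_eq_smul_one, mul_smul_comm, mul_one]

namespace Matrix.IsMetzler

variable {A : Matrix ι ι ℝ}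

theorem exists_pos_smul_one_le_exp (hA : A.IsMetzler) :
    ∃ c : ℝ, 0 < c ∧ ∀ i j, (c • (1 : Matrix ι ι ℝ)) i j ≤ exp A i j := by
  set α := ∑ k, |A k k|
  have hB : ∀ i j, 0 ≤ (A + α • 1) i j := by
    intro i j
    rcases eq_or_ne i j with rfl | hij
    · have := Finset.single_le_sum (fun k _ => abs_nonneg (A k k)) (Finset.mem_univ i)
      simp only [add_apply, smul_apply, one_apply_eq, smul_eq_mul, mul_one]
      linarith [neg_abs_le (A i i)]
    · simpa [one_apply_ne hij] using hA i j hij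
  refine ⟨Real.exp (-α), Real.exp_pos _, fun i j => ?_⟩
  have hexp : exp A = Real.exp (-α) • exp (A + α • 1) := by
    rw [exp_add_smul_one, smul_smul, ← Real.exp_add, neg_add_cancel, Real.exp_zero, one_smul]
  rw [hexp, smul_apply, smul_apply]
  exact mul_le_mul_of_nonneg_left (one_apply_le_exp_apply hB i j) (Real.exp_pos _).le

theorem exists_pos_mul_le_exp_mulVec (hA : A.IsMetzler) :
    ∃ c : ℝ, 0 < c ∧ ∀ w : ι → ℝ, (∀ j, 0 ≤ w j) → ∀ i, c * w i ≤ (exp A *ᵥ w) i := by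
  obtain ⟨c, hc, hle⟩ := hA.exists_pos_smul_one_le_exp
  refine ⟨c, hc, fun w hw i => ?_⟩
  calc c * w i = ((c • (1 : Matrix ι ι ℝ)) *ᵥ w) i := by simp [smul_mulVec]
    _ ≤ (exp A *ᵥ w) i :=
      Finset.sum_le_sum fun j _ => mul_le_mul_of_nonneg_right (hle i j) (hw j)

theorem mulVec_le_add (hA : A.IsMetzler) {x y : ι → ℝ} (hxy : ∀ j, x j ≤ y j) (i : ι) :
    (A *ᵥ x) i ≤ (A *ᵥ y) i + A i i * (x i - y i) := by
  have hoff : ∑ j ∈ Finset.univ.erase i, A i j * (x j - y j) ≤ 0 :=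
    Finset.sum_nonpos fun j hj =>
      mul_nonpos_of_nonneg_of_nonpos (hA i j (Finset.ne_of_mem_erase hj).symm)
        (sub_nonpos.2 (hxy j))
  have hdiff : (A *ᵥ x) i - (A *ᵥ y) i = ∑ j, A i j * (x j - y j) := by
    simp only [mulVec, dotProduct, mul_sub, Finset.sum_sub_distrib]
  rw [← Finset.add_sum_erase _ _ (Finset.mem_univ i)] at hdiff
  linarith

end Matrix.IsMetzler

theorem hasDerivAt_exp_smul_mulVec (w : ι → ℝ) (τ : ℝ) :
    HasDerivAt (fun τ : ℝ => exp (τ • J) *ᵥ w) (J *ᵥ (exp (τ • J) *ᵥ w)) τ := by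
  let L : Matrix ι ι ℝ →L[ℝ] ι → ℝ := LinearMap.toContinuousLinearMap ((mulVecBilin ℝ ℝ).flip w)
  rw [mulVec_mulVec]
  exact L.hasFDerivAt.comp_hasDerivAt τ (hasDerivAt_exp_smul_const' J τ)

end MatrixExp

theorem continuous_exp_smul_mulVec (w : ι → ℝ) : Continuous fun τ : ℝ => exp (τ • J) *ᵥ w :=
  continuous_iff_continuousAt.2 fun τ => (hasDerivAt_exp_smul_mulVec J w τ).continuousAt

theorem mulVec_integral_exp_smul_mulVec (D : ι → ℝ) (τ : ℝ) :
    J *ᵥ ∫ u in 0..τ, exp (u • J) *ᵥ D = exp (τ • J) *ᵥ D - D := by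
  calc J *ᵥ ∫ u in 0..τ, exp (u • J) *ᵥ D = ∫ u in 0..τ, J *ᵥ (exp (u • J) *ᵥ D) :=
        ((mulVecLin J).toContinuousLinearMap.intervalIntegral_comp_comm
          ((continuous_exp_smul_mulVec J D).intervalIntegrable 0 τ)).symm
    _ = exp (τ • J) *ᵥ D - D := by
        rw [intervalIntegral.integral_eq_sub_of_hasDerivAt
          (fun u _ => hasDerivAt_exp_smul_mulVec J D u)
          ((continuous_const.matrix_mulVec
            (continuous_exp_smul_mulVec J D)).intervalIntegrable 0 τ)]
        simp

theorem linearFlow_eq (w D : ι → ℝ) (t₀ t : ℝ) :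
    linearFlow J w D t₀ t = exp ((t - t₀) • J) *ᵥ w + ∫ u in 0..t - t₀, exp (u • J) *ᵥ D := by
  rw [linearFlow, intervalIntegral.integral_comp_sub_left (fun u => exp (u • J) *ᵥ D) t, sub_self]

theorem linearFlow_self (w D : ι → ℝ) (t₀ : ℝ) : linearFlow J w D t₀ t₀ = w := by
  simp [linearFlow]

theorem hasDerivAt_linearFlow (w D : ι → ℝ) (t₀ t : ℝ) :
    HasDerivAt (linearFlow J w D t₀) (J *ᵥ linearFlow J w D t₀ t + D) t := by
  have hexp := (hasDerivAt_exp_smul_mulVec J w (t - t₀)).comp_sub_const t t₀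
  have hint := ((continuous_exp_smul_mulVec J D).integral_hasStrictDerivAt 0
    (t - t₀)).hasDerivAt.comp_sub_const t t₀
  rw [funext (linearFlow_eq J w D t₀)]
  refine (hexp.add hint).congr_deriv ?_
  beta_reduce
  rw [mulVec_add, mulVec_integral_exp_smul_mulVec]
  abel

theorem continuous_linearFlow (w D : ι → ℝ) (t₀ : ℝ) : Continuous (linearFlow J w D t₀) :=
  continuous_iff_continuousAt.2 fun t => (hasDerivAt_linearFlow J w D t₀ t).continuousAt

theorem linearFlow_add_smul (w D u E : ι → ℝ) (ε t₀ t : ℝ) :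
    linearFlow J (w + ε • u) (D + ε • E) t₀ t =
      linearFlow J w D t₀ t + ε • linearFlow J u E t₀ t := by
  have hD := (continuous_exp_smul_mulVec J D).intervalIntegrable (μ := volume) 0 (t - t₀)
  have hE : IntervalIntegrable (fun u => ε • (exp (u • J) *ᵥ E)) volume 0 (t - t₀) :=
    ((continuous_exp_smul_mulVec J E).const_smul ε).intervalIntegrable _ _
  simp_rw [linearFlow_eq, mulVec_add, mulVec_smul]
  rw [intervalIntegral.integral_add hD hE, intervalIntegral.integral_smul]
  module

namespace Matrix.IsMetzler

variable {J}

theorem linearFlow_pos (hJ : J.IsMetzler) {w D : ι → ℝ}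
    (hw : ∀ i, 0 < w i) (hD : ∀ i, 0 ≤ D i) {t₀ t : ℝ} (ht : t₀ ≤ t) (i : ι) :
    0 < linearFlow J w D t₀ t i := by
  obtain ⟨c, hc, hcw⟩ := (hJ.smul (sub_nonneg.2 ht)).exists_pos_mul_le_exp_mulVec
  have hint : 0 ≤ (∫ u in 0..t - t₀, exp (u • J) *ᵥ D) i := by
    rw [intervalIntegral.eval_integral ((continuous_exp_smul_mulVec J D).intervalIntegrable _ _)]
    refine intervalIntegral.integral_nonneg (sub_nonneg.2 ht) fun u hu => ?_
    obtain ⟨c', hc', hc'D⟩ := (hJ.smul hu.1).exists_pos_mul_le_exp_mulVec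
    exact (mul_nonneg hc'.le (hD i)).trans (hc'D D hD i)
  rw [linearFlow_eq, Pi.add_apply]
  linarith [mul_pos hc (hw i), hcw w (fun j => (hw j).le) i]

theorem sub_lt_linearFlow_sub (hJ : J.IsMetzler) {e : ℝ → ι → ℝ} {q : ℝ → ℝ}
    {w D c : ι → ℝ} {t₀ s T : ℝ} {a : ι} (hsT : s < T)
    (he : ContinuousOn e (Icc s T)) (hq : IntegrableOn q (Icc s T))
    (heq : e T a - e s a = ∫ r in s..T, q r)
    (hq_le : ∀ r ∈ Icc s T, q r ≤ (J *ᵥ e r) a + c a)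
    (hle : ∀ r ∈ Icc s T, ∀ j, e r j ≤ linearFlow J w D t₀ r j)
    (hdiag : ∀ r ∈ Icc s T, J a a * (e r a - linearFlow J w D t₀ r a) < D a - c a) :
    e T a - e s a < linearFlow J w D t₀ T a - linearFlow J w D t₀ s a := by
  set v := linearFlow J w D t₀
  have hJe : ContinuousOn (fun r => (J *ᵥ e r) a + c a) (Icc s T) :=
    ((continuous_apply a).comp_continuousOn
      ((continuous_const.matrix_mulVec continuous_id).comp_continuousOn he)).add continuousOn_const
  have hJv : Continuous fun r => (J *ᵥ v r) a + D a :=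
    ((continuous_apply a).comp
      (continuous_const.matrix_mulVec (continuous_linearFlow J w D t₀))).add continuous_const
  have hlt : ∀ r ∈ Icc s T, (J *ᵥ e r) a + c a < (J *ᵥ v r) a + D a := fun r hr => by
    linarith [hJ.mulVec_le_add (hle r hr) a, hdiag r hr]
  calc e T a - e s a = ∫ r in s..T, q r := heq
    _ ≤ ∫ r in s..T, ((J *ᵥ e r) a + c a) :=
      intervalIntegral.integral_mono_on hsT.le
        ((intervalIntegrable_iff_integrableOn_Icc_of_le hsT.le).2 hq)
        (hJe.intervalIntegrable_of_Icc hsT.le) hq_le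
    _ < ∫ r in s..T, ((J *ᵥ v r) a + D a) :=
      intervalIntegral.integral_lt_integral_of_continuousOn_of_le_of_exists_lt hsT hJe
        hJv.continuousOn (fun r hr => (hlt r (Ioc_subset_Icc_self hr)).le)
        ⟨T, right_mem_Icc.2 hsT.le, hlt T (right_mem_Icc.2 hsT.le)⟩
    _ = v T a - v s a :=
      intervalIntegral.integral_eq_sub_of_hasDerivAt
        (fun r _ => hasDerivAt_pi.1 (hasDerivAt_linearFlow J w D t₀ r) a)
        (hJv.intervalIntegrable s T)

variable {Δ G : ℝ → ι → ℝ} {Δ₀ c : ι → ℝ} {t₀ t₁ : ℝ}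

theorem abs_sub_abs_lt_linearFlow_sub (hJ : J.IsMetzler) (hG : IntegrableOn G (Icc t₀ t₁))
    (hΔ : ∀ t ∈ Icc t₀ t₁, Δ t = Δ₀ + ∫ s in t₀..t, G s)
    (hbound : ∀ t ∈ Icc t₀ t₁, ∀ i, ∀ σ : ℝ, |σ| = 1 → σ * Δ t i = |Δ t i| →
      σ * G t i ≤ (J *ᵥ fun j => |Δ t j|) i + c i)
    {w D : ι → ℝ} {s T : ℝ} (hsT : s < T) (hsub : Icc s T ⊆ Icc t₀ t₁) {a : ι} {σ : ℝ}
    (hσ : |σ| = 1) (hsign : ∀ r ∈ Icc s T, σ * Δ r a = |Δ r a|)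
    (hle : ∀ r ∈ Icc s T, ∀ j, |Δ r j| ≤ linearFlow J w D t₀ r j)
    (hdiag : ∀ r ∈ Icc s T, J a a * (|Δ r a| - linearFlow J w D t₀ r a) < D a - c a) :
    |Δ T a| - |Δ s a| < linearFlow J w D t₀ T a - linearFlow J w D t₀ s a := by
  have hs : s ∈ Icc s T := left_mem_Icc.2 hsT.le
  have hT : T ∈ Icc s T := right_mem_Icc.2 hsT.le
  have hGs : IntegrableOn G (Icc s T) := hG.mono_set hsub
  have hdiff : Δ T a - Δ s a = ∫ r in s..T, G r a := by
    rw [← Pi.sub_apply, sub_eq_integral_of_eq_add_integral hG hΔ (hsub hs) (hsub hT),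
      intervalIntegral.eval_integral ((intervalIntegrable_iff_integrableOn_Icc_of_le hsT.le).2 hGs)]
  refine hJ.sub_lt_linearFlow_sub (e := fun r j => |Δ r j|) (q := fun r => σ * G r a) hsT
    (continuousOn_pi.2 fun j => ((continuous_apply j).comp_continuousOn
      ((continuousOn_of_eq_add_integral hG hΔ).mono hsub)).abs)
    ((Integrable.eval hGs a).const_mul σ) ?_ (fun r hr => hbound r (hsub hr) a σ hσ (hsign r hr))
    hle hdiag
  rw [← hsign T hT, ← hsign s hs, ← mul_sub, hdiff, intervalIntegral.integral_const_mul]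

theorem abs_lt_linearFlow (hJ : J.IsMetzler) (hG : IntegrableOn G (Icc t₀ t₁))
    (hΔ : ∀ t ∈ Icc t₀ t₁, Δ t = Δ₀ + ∫ s in t₀..t, G s)
    (hbound : ∀ t ∈ Icc t₀ t₁, ∀ i, ∀ σ : ℝ, |σ| = 1 → σ * Δ t i = |Δ t i| →
      σ * G t i ≤ (J *ᵥ fun j => |Δ t j|) i + c i)
    {w D : ι → ℝ} (hw : ∀ i, |Δ₀ i| < w i) (hcD : ∀ i, c i < D i) (hD : ∀ i, 0 ≤ D i) :
    ∀ t ∈ Icc t₀ t₁, ∀ i, |Δ t i| < linearFlow J w D t₀ t i := by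
  set v := linearFlow J w D t₀
  by_contra! hfail
  obtain ⟨t, ht, i, hi⟩ := hfail
  have ht₀ : t₀ ∈ Icc t₀ t₁ := ⟨le_rfl, ht.1.trans ht.2⟩
  have hΔc := continuousOn_of_eq_add_integral hG hΔ
  have he : ContinuousOn (fun t j => |Δ t j|) (Icc t₀ t₁) :=
    continuousOn_pi.2 fun j => ((continuous_apply j).comp_continuousOn hΔc).abs
  obtain ⟨T, hT, hlt, hle, a, haT⟩ := exists_first_nonpos (g := fun t j => v t j - |Δ t j|)
    ((continuous_linearFlow J w D t₀).continuousOn.sub he)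
    (fun i => by simpa [v, linearFlow_self, show Δ t₀ = Δ₀ by simpa using hΔ t₀ ht₀] using hw i)
    ⟨t, ht, i, sub_nonpos.2 hi⟩
  simp only [sub_pos, sub_nonneg, sub_eq_zero] at hlt hle haT
  have hTI : T ∈ Icc t₀ t₁ := Ioc_subset_Icc_self hT
  -- `Δ T a ≠ 0`, so just before `T` the component `Δ · a` keeps the sign `σ`.
  obtain ⟨σ, hσ, hσT⟩ : ∃ σ : ℝ, |σ| = 1 ∧ σ * Δ T a = |Δ T a| := by
    rcases le_total 0 (Δ T a) with h | h
    · exact ⟨1, abs_one, by rw [one_mul, abs_of_nonneg h]⟩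
    · exact ⟨-1, by simp, by rw [neg_one_mul, abs_of_nonpos h]⟩
  have hvT : 0 < v T a := hJ.linearFlow_pos (fun j => (abs_nonneg _).trans_lt (hw j)) hD hT.1.le a
  have hleft : ∀ φ : ℝ → ℝ, ContinuousOn φ (Icc t₀ t₁) → Tendsto φ (𝓝[≤] T) (𝓝 (φ T)) :=
    fun φ hφ => (continuousWithinAt_Icc_iff_Iic hT.1).1
      ((hφ T hTI).mono (Icc_subset_Icc_right hT.2))
  have hsignT := (hleft (fun r => σ * Δ r a)
    (continuousOn_const.mul ((continuous_apply a).comp_continuousOn hΔc))).eventually_const_lt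
    (show 0 < σ * Δ T a by rwa [hσT, ← haT])
  have hdiagT := (hleft (fun r => J a a * (|Δ r a| - v r a))
    (continuousOn_const.mul (((continuous_apply a).comp_continuousOn he).sub
      ((continuous_apply a).comp (continuous_linearFlow J w D t₀)).continuousOn)))
    |>.eventually_lt_const (show J a a * (|Δ T a| - v T a) < D a - c a by simp [haT, hcD a])
  obtain ⟨s, hsT, hgood⟩ := exists_Icc_subset_of_eventually_nhdsLE
    ((eventually_mem_set.2 (Icc_mem_nhdsLE hT.1)).and (hsignT.and hdiagT))
  have hsub : Icc s T ⊆ Icc t₀ t₁ := fun r hr => ⟨(hgood r hr).1.1, hr.2.trans hT.2⟩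
  have hstep := hJ.abs_sub_abs_lt_linearFlow_sub hG hΔ hbound hsT hsub hσ
    (fun r hr => by rw [← abs_of_pos (hgood r hr).2.1, abs_mul, hσ, one_mul])
    (fun r hr j => hr.2.lt_or_eq.elim (fun h => (hlt r ⟨(hgood r hr).1.1, h⟩ j).le)
      (fun h => h ▸ hle j))
    (fun r hr => (hgood r hr).2.2)
  linarith [hlt s ⟨(hgood s (left_mem_Icc.2 hsT.le)).1.1, hsT⟩ a]

theorem abs_le_linearFlow (hJ : J.IsMetzler) (hG : IntegrableOn G (Icc t₀ t₁))
    (hΔ : ∀ t ∈ Icc t₀ t₁, Δ t = Δ₀ + ∫ s in t₀..t, G s)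
    (hbound : ∀ t ∈ Icc t₀ t₁, ∀ i, ∀ σ : ℝ, |σ| = 1 → σ * Δ t i = |Δ t i| →
      σ * G t i ≤ (J *ᵥ fun j => |Δ t j|) i + c i)
    (hc : ∀ i, 0 ≤ c i) :
    ∀ t ∈ Icc t₀ t₁, ∀ i, |Δ t i| ≤ linearFlow J (fun j => |Δ₀ j|) c t₀ t i := by
  intro t ht i
  set R := linearFlow J (fun j => |Δ₀ j|) c t₀ t i
  set K := linearFlow J 1 1 t₀ t i
  have hlt : ∀ ε > 0, |Δ t i| < R + ε * K := fun ε hε => by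
    have := hJ.abs_lt_linearFlow hG hΔ hbound (w := (fun j => |Δ₀ j|) + ε • 1) (D := c + ε • 1)
      (fun j => by simp [hε]) (fun j => by simp [hε]) (fun j => by simp; linarith [hc j]) t ht i
    rwa [linearFlow_add_smul, Pi.add_apply, Pi.smul_apply, smul_eq_mul] at this
  have hlim : Tendsto (fun ε => R + ε * K) (𝓝[>] 0) (𝓝 R) :=
    ((show Continuous fun ε : ℝ => R + ε * K by fun_prop).tendsto' 0 R (by simp)).mono_left
      nhdsWithin_le_nhds
  exact ge_of_tendsto hlim (eventually_nhdsWithin_of_forall fun ε hε => (hlt ε hε).le)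

end Matrix.IsMetzler

end ComparisonPrinciple

open Set MeasureTheory

theorem ode_perturbation_componentwise_bound_general
    {n m : ℕ} (t₀ h : ℝ)
    (f : (Fin n → ℝ) → (Fin m → ℝ) → Fin n → ℝ)
    (hf : ContDiff ℝ 1 (fun p : (Fin n → ℝ) × (Fin m → ℝ) => f p.1 p.2))
    (y : ℝ → Fin m → ℝ) (Wy : Set (Fin m → ℝ)) (y_c : Fin m → ℝ)
    (hymeas : AEStronglyMeasurable y (volume.restrict (Icc t₀ (t₀ + h))))
    (hybd : ∃ M, ∀ t ∈ Icc t₀ (t₀ + h), ‖y t‖ ≤ M)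
    (hyWy : ∀ t ∈ Icc t₀ (t₀ + h), y t ∈ Wy)
    (x₀ xb₀ : Fin n → ℝ) (x₁ x₂ : ℝ → Fin n → ℝ)
    (hx₁cont : ContinuousOn x₁ (Icc t₀ (t₀ + h)))
    (hx₂cont : ContinuousOn x₂ (Icc t₀ (t₀ + h)))
    (hx₁ : ∀ t ∈ Icc t₀ (t₀ + h), x₁ t = x₀ + ∫ s in t₀..t, f (x₁ s) y_c)
    (hx₂ : ∀ t ∈ Icc t₀ (t₀ + h), x₂ t = xb₀ + ∫ s in t₀..t, f (x₂ s) (y s))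
    (W₁ W₂ : Set (Fin n → ℝ))
    (hW₂ : Convex ℝ W₂) (hW₁₂ : W₁ ⊆ W₂)
    (hx₁W : ∀ t ∈ Icc t₀ (t₀ + h), x₁ t ∈ W₁)
    (hx₂W : ∀ t ∈ Icc t₀ (t₀ + h), x₂ t ∈ W₂)
    (C : Fin n → ℝ)
    (hC : ∀ i, ∀ x ∈ W₁, ∀ w ∈ Wy, |f x y_c i - f x w i| ≤ C i)
    (J : Matrix (Fin n) (Fin n) ℝ)
    (hJdiag : ∀ i, ∀ x ∈ W₂, ∀ w ∈ Wy,
      fderiv ℝ (fun v => f v w i) x (Pi.single i 1) ≤ J i i)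
    (hJoff : ∀ i j, i ≠ j → ∀ x ∈ W₂, ∀ w ∈ Wy,
      |fderiv ℝ (fun v => f v w i) x (Pi.single j 1)| ≤ J i j) :
    ∀ t ∈ Icc t₀ (t₀ + h), ∀ i,
      |x₁ t i - x₂ t i| ≤
        ((NormedSpace.exp ((t - t₀) • J)).mulVec (fun j => |x₀ j - xb₀ j|)) i +
        (∫ s in t₀..t, (NormedSpace.exp ((t - s) • J)).mulVec C) i := by
  intro t ht i
  have ht₀ : t₀ ∈ Icc t₀ (t₀ + h) := ⟨le_rfl, ht.1.trans ht.2⟩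
  obtain ⟨M, hM⟩ := hybd
  have hfc : Continuous fun p : (Fin n → ℝ) × (Fin m → ℝ) => f p.1 p.2 := hf.continuous
  have hF₁ : IntegrableOn (fun s => f (x₁ s) y_c) (Icc t₀ (t₀ + h)) :=
    integrableOn_Icc_comp_of_bounded hfc hx₁cont aestronglyMeasurable_const fun _ _ => le_rfl
  have hF₂ : IntegrableOn (fun s => f (x₂ s) (y s)) (Icc t₀ (t₀ + h)) :=
    integrableOn_Icc_comp_of_bounded hfc hx₂cont hymeas hM
  have hJ : J.IsMetzler := fun j k hjk =>
    (abs_nonneg _).trans (hJoff j k hjk _ (hx₂W t₀ ht₀) _ (hyWy t₀ ht₀))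
  have hC₀ : ∀ j, 0 ≤ C j := fun j =>
    (abs_nonneg _).trans (hC j _ (hx₁W t₀ ht₀) _ (hyWy t₀ ht₀))
  have hfd : ∀ w k, Differentiable ℝ fun v => f v w k := fun w k =>
    ((contDiff_apply ℝ ℝ k).comp (hf.comp (contDiff_id.prodMk contDiff_const))).differentiable
      one_ne_zero
  refine hJ.abs_le_linearFlow (G := fun s => f (x₁ s) y_c - f (x₂ s) (y s)) (hF₁.sub hF₂)
    (sub_eq_add_integral_sub hF₁ hF₂ hx₁ hx₂) (fun s hs k σ hσ hsign => ?_) hC₀ t ht i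
  have hpert : σ * (f (x₁ s) y_c k - f (x₁ s) (y s) k) ≤ C k :=
    (le_abs_self _).trans (by rw [abs_mul, hσ, one_mul]; exact hC k _ (hx₁W s hs) _ (hyWy s hs))
  have hlip := hW₂.mul_sub_le_mulVec_abs_sub (g := fun v => f v (y s))
    (fun k x _ => (hfd _ k).differentiableAt) (fun k x hx => hJdiag k x hx _ (hyWy s hs))
    (fun k j hkj x hx => hJoff k j hkj x hx _ (hyWy s hs)) (hW₁₂ (hx₁W s hs)) (hx₂W s hs) k hσ
    hsign
  simp only [Pi.sub_apply] at hlip ⊢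
  linarith

/-- Componentwise comparison theorem for a perturbed ODE (decomposition into one-dimensional
blocks): with `J` bounding the Jacobian blocks of `f` over `[W₂] × [W_y]` (diagonal entries
bound the logarithmic norm, i.e. the partial derivative itself in the one-dimensional case;
off-diagonal entries bound the norms) and `C` bounding the perturbation
`f(x, y_c) - f(x, y)` over `[W₁] × [W_y]`, the difference of the solution `x₁` of
`x₁' = f(x₁, y_c)` and the weak solution `x₂` of `x₂' = f(x₂, y(t))` satisfies
`|x₁ᵢ(t) - x₂ᵢ(t)| ≤ (e^{J(t-t₀)}|x₀ - xb₀|)ᵢ + (∫_{t₀}^t e^{J(t-s)} C ds)ᵢ`. -/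
theorem ode_perturbation_componentwise_bound
    {n m : ℕ} (t₀ h : ℝ) (hh : 0 < h)
    (f : (Fin n → ℝ) → (Fin m → ℝ) → Fin n → ℝ)
    (hf : ContDiff ℝ 1 (fun p : (Fin n → ℝ) × (Fin m → ℝ) => f p.1 p.2))
    (y : ℝ → Fin m → ℝ) (Wy : Set (Fin m → ℝ)) (y_c : Fin m → ℝ)
    (hymeas : AEStronglyMeasurable y (volume.restrict (Icc t₀ (t₀ + h))))
    (hybd : ∃ M, ∀ t ∈ Icc t₀ (t₀ + h), ‖y t‖ ≤ M)
    (hWy : Convex ℝ Wy) (hyWy : ∀ t ∈ Icc t₀ (t₀ + h), y t ∈ Wy) (hyc : y_c ∈ Wy)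
    (x₀ xb₀ : Fin n → ℝ) (x₁ x₂ : ℝ → Fin n → ℝ)
    (hx₁cont : ContinuousOn x₁ (Icc t₀ (t₀ + h)))
    (hx₂cont : ContinuousOn x₂ (Icc t₀ (t₀ + h)))
    (hx₁ : ∀ t ∈ Icc t₀ (t₀ + h), x₁ t = x₀ + ∫ s in t₀..t, f (x₁ s) y_c)
    (hx₂ : ∀ t ∈ Icc t₀ (t₀ + h), x₂ t = xb₀ + ∫ s in t₀..t, f (x₂ s) (y s))
    (W₁ W₂ : Set (Fin n → ℝ))
    (hW₁ : Convex ℝ W₁) (hW₁c : IsCompact W₁)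
    (hW₂ : Convex ℝ W₂) (hW₂c : IsCompact W₂) (hW₁₂ : W₁ ⊆ W₂)
    (hx₁W : ∀ t ∈ Icc t₀ (t₀ + h), x₁ t ∈ W₁)
    (hx₂W : ∀ t ∈ Icc t₀ (t₀ + h), x₂ t ∈ W₂)
    (C : Fin n → ℝ)
    (hC : ∀ i, ∀ x ∈ W₁, ∀ w ∈ Wy, |f x y_c i - f x w i| ≤ C i)
    (J : Matrix (Fin n) (Fin n) ℝ)
    (hJdiag : ∀ i, ∀ x ∈ W₂, ∀ w ∈ Wy,
      fderiv ℝ (fun v => f v w i) x (Pi.single i 1) ≤ J i i)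
    (hJoff : ∀ i j, i ≠ j → ∀ x ∈ W₂, ∀ w ∈ Wy,
      |fderiv ℝ (fun v => f v w i) x (Pi.single j 1)| ≤ J i j) :
    ∀ t ∈ Icc t₀ (t₀ + h), ∀ i,
      |x₁ t i - x₂ t i| ≤
        ((NormedSpace.exp ((t - t₀) • J)).mulVec (fun j => |x₀ j - xb₀ j|)) i +
        (∫ s in t₀..t, (NormedSpace.exp ((t - s) • J)).mulVec C) i :=
  ode_perturbation_componentwise_bound_general t₀ h f hf y Wy y_c hymeas hybd hyWy x₀ xb₀ x₁ x₂
    hx₁cont hx₂cont hx₁ hx₂ W₁ W₂ hW₂ hW₁₂ hx₁W hx₂W C hC J hJdiag hJoff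
end
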